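/- For the Hénon–Heiles system with potential V(q₁,q₂)=q₁(a q₂²+b q₁²), the explicit 2-form ω̃ is an invariant of the Hamiltonian flow: the Lie derivative of ω̃ along the Hamiltonian vector field X vanishes identically, i.e. for all indices i,j one has Σ_k ( X^k ∂ω̃_{ij}/∂x^k + ω̃_{kj} ∂X^k/∂x^i + ω̃_{ik} ∂X^k/∂x^j ) = 0 on all of ℝ⁴. -/

import Mathlib

open Real

noncomputable section

/-- Partial derivative of `F` in the `k`-th coordinate direction at `x`. -/
def pd (F : (Fin 4 → ℝ) → ℝ) (k : Fin 4) (x : Fin 4 → ℝ) : ℝ :=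
  fderiv ℝ F x (Pi.single k 1)

/-- The canonical Poisson bivector on ℝ⁴. -/
def Pcan : Matrix (Fin 4) (Fin 4) ℝ :=
  !![0, 0, 1, 0; 0, 0, 0, 1; -1, 0, 0, 0; 0, -1, 0, 0]

/-- Lie derivative of a bivector field `T` along a vector field `Xf`:
`(L_X T)^{ij} = Σ_k ( X^k ∂T^{ij}/∂x^k − T^{kj} ∂X^i/∂x^k − T^{ik} ∂X^j/∂x^k )`. -/
def lieDerivBiv (Xf : (Fin 4 → ℝ) → Fin 4 → ℝ)
    (T : (Fin 4 → ℝ) → Matrix (Fin 4) (Fin 4) ℝ)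
    (i j : Fin 4) (x : Fin 4 → ℝ) : ℝ :=
  ∑ k, (Xf x k * pd (fun y => T y i j) k x
      - T x k j * pd (fun y => Xf y i) k x
      - T x i k * pd (fun y => Xf y j) k x)

/-- Lie derivative of a 2-form `ω` along a vector field `Xf`:
`(L_X ω)_{ij} = Σ_k ( X^k ∂ω_{ij}/∂x^k + ω_{kj} ∂X^k/∂x^i + ω_{ik} ∂X^k/∂x^j )`. -/
def lieDerivForm (Xf : (Fin 4 → ℝ) → Fin 4 → ℝ)
    (ω : (Fin 4 → ℝ) → Matrix (Fin 4) (Fin 4) ℝ)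
    (i j : Fin 4) (x : Fin 4 → ℝ) : ℝ :=
  ∑ k, (Xf x k * pd (fun y => ω y i j) k x
      + ω x k j * pd (fun y => Xf y k) i x
      + ω x i k * pd (fun y => Xf y k) j x)

/-- The Jacobiator of a bivector field `A`; `A` satisfies the Jacobi identity iff it
vanishes for all indices `i j k`. -/
def jac (A : (Fin 4 → ℝ) → Matrix (Fin 4) (Fin 4) ℝ)
    (i j k : Fin 4) (x : Fin 4 → ℝ) : ℝ :=
  ∑ l, (A x l i * pd (fun y => A y j k) l x
      + A x l j * pd (fun y => A y k i) l x
      + A x l k * pd (fun y => A y i j) l x)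

/-- The mixed Schouten bracket expression of two bivector fields `A` and `B`. -/
def mixedSchouten (A B : (Fin 4 → ℝ) → Matrix (Fin 4) (Fin 4) ℝ)
    (i j k : Fin 4) (x : Fin 4 → ℝ) : ℝ :=
  ∑ l, (A x l i * pd (fun y => B y j k) l x
      + A x l j * pd (fun y => B y k i) l x
      + A x l k * pd (fun y => B y i j) l x
      + B x l i * pd (fun y => A y j k) l x
      + B x l j * pd (fun y => A y k i) l x
      + B x l k * pd (fun y => A y i j) l x)

/-- Hénon–Heiles potential `V = q₁ (a q₂² + b q₁²)`. -/
def VHH (a b : ℝ) (x : Fin 4 → ℝ) : ℝ := x 0 * (a * (x 1) ^ 2 + b * (x 0) ^ 2)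

/-- Hénon–Heiles Hamiltonian. -/
def HHH (a b : ℝ) (x : Fin 4 → ℝ) : ℝ := ((x 2) ^ 2 + (x 3) ^ 2) / 2 + VHH a b x

/-- Hénon–Heiles Hamiltonian vector field `X = (p₁, p₂, −∂V/∂q₁, −∂V/∂q₂)`. -/
def XHH (a b : ℝ) (x : Fin 4 → ℝ) : Fin 4 → ℝ :=
  ![x 2, x 3, -(pd (VHH a b) 0 x), -(pd (VHH a b) 1 x)]

/-- The invariant bivector `P̃` of the Hénon–Heiles system. -/
def PtHH (a b : ℝ) (x : Fin 4 → ℝ) : Matrix (Fin 4) (Fin 4) ℝ :=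
  let q1 := x 0; let q2 := x 1; let p1 := x 2; let p2 := x 3
  let e12 := (4 / 3) * (q2 * p1 - q1 * p2)
  let e13 := p1 ^ 2 - p2 ^ 2 - (2 / 3) * a * q1 * q2 ^ 2 + 2 * b * q1 ^ 3
  let e14 := 2 * p1 * p2 + (8 / 3) * a * q1 ^ 2 * q2
  let e23 := 2 * p1 * p2 + (4 / 3) * a * q2 ^ 3 + 4 * b * q1 ^ 2 * q2
  let e24 := p2 ^ 2 - p1 ^ 2 + (2 / 3) * a * q1 * q2 ^ 2 - 2 * b * q1 ^ 3
  let e34 := 4 * a * q1 * q2 * p1 - (2 * a * q2 ^ 2 + 6 * b * q1 ^ 2) * p2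
  !![0, e12, e13, e14;
     -(e12), 0, e23, e24;
     -(e13), -(e23), 0, e34;
     -(e14), -(e24), -(e34), 0]

/-- The invariant 2-form `ω̃` of the Hénon–Heiles system. -/
def OmHH (a b : ℝ) (x : Fin 4 → ℝ) : Matrix (Fin 4) (Fin 4) ℝ :=
  let q1 := x 0; let q2 := x 1; let p1 := x 2; let p2 := x 3
  let w12 := ((a * q2 ^ 2 + 3 * b * q1 ^ 2) / 2) * p2 - a * q1 * q2 * p1
  let w13 := a * q1 * q2 ^ 2 / 6 - b * q1 ^ 3 / 2 - (p1 ^ 2 - p2 ^ 2) / 4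
  let w14 := -(a * q2 ^ 3 / 3 + b * q1 ^ 2 * q2 + p1 * p2 / 2)
  let w23 := -(2 * a * q1 ^ 2 * q2 / 3 + p1 * p2 / 2)
  let w24 := -(a * q1 * q2 ^ 2) / 6 + b * q1 ^ 3 / 2 + (p1 ^ 2 - p2 ^ 2) / 4
  let w34 := (q1 * p2 - q2 * p1) / 3
  !![0, w12, w13, w14;
     -(w12), 0, w23, w24;
     -(w13), -(w23), 0, w34;
     -(w14), -(w24), -(w34), 0]

/-! All coefficients of `X` and `ω̃` are polynomials, so the Leibniz rules for `pd` turn each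
component of `L_X ω̃` into a polynomial identity in `q₁, q₂, p₁, p₂, a, b`, checked by `ring`. -/

section PartialDerivative

variable {F G : (Fin 4 → ℝ) → ℝ} {k : Fin 4} {x : Fin 4 → ℝ}

theorem pd_coord (i : Fin 4) : pd (fun y => y i) k x = if i = k then 1 else 0 := by
  rw [pd, (hasFDerivAt_apply i x).fderiv]
  simp [Pi.single_apply]

theorem pd_const (c : ℝ) : pd (fun _ => c) k x = 0 := by
  simp [pd]

theorem pd_add (hF : DifferentiableAt ℝ F x) (hG : DifferentiableAt ℝ G x) :
    pd (fun y => F y + G y) k x = pd F k x + pd G k x := by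
  simp [pd, fderiv_fun_add hF hG]

theorem pd_sub (hF : DifferentiableAt ℝ F x) (hG : DifferentiableAt ℝ G x) :
    pd (fun y => F y - G y) k x = pd F k x - pd G k x := by
  simp [pd, fderiv_fun_sub hF hG]

theorem pd_neg : pd (fun y => -F y) k x = -pd F k x := by
  simp [pd]

theorem pd_mul (hF : DifferentiableAt ℝ F x) (hG : DifferentiableAt ℝ G x) :
    pd (fun y => F y * G y) k x = pd F k x * G x + F x * pd G k x := by
  simp [pd, fderiv_fun_mul hF hG]
  ring

theorem pd_div_const (hF : DifferentiableAt ℝ F x) (c : ℝ) :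
    pd (fun y => F y / c) k x = pd F k x / c := by
  simp [pd, div_eq_mul_inv, fderiv_mul_const hF, mul_comm]

theorem pd_pow (hF : DifferentiableAt ℝ F x) (n : ℕ) :
    pd (fun y => F y ^ n) k x = n * F x ^ (n - 1) * pd F k x := by
  simp [pd, fderiv_fun_pow n hF]

end PartialDerivative

theorem XHH_eq (a b : ℝ) :
    XHH a b = fun x => ![x 2, x 3, -(a * x 1 ^ 2 + 3 * b * x 0 ^ 2), -(2 * a * x 0 * x 1)] := by
  funext x
  unfold XHH VHH
  simp (disch := fun_prop) only [pd_mul, pd_add, pd_pow, pd_coord, pd_const, Fin.reduceEq,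
    reduceIte, Nat.cast_ofNat, Nat.reduceSub]
  ring_nf

/-- the 2-form `ω̃` is an invariant of the Hénon–Heiles flow:
`L_X ω̃ = 0` on all of ℝ⁴. -/
theorem statement4 (a b : ℝ) :
    ∀ (i j : Fin 4) (x : Fin 4 → ℝ), lieDerivForm (XHH a b) (OmHH a b) i j x = 0 := by
  intro i j x
  rw [XHH_eq]
  fin_cases i <;> fin_cases j <;>
    simp (disch := fun_prop) only [lieDerivForm, Fin.sum_univ_four, OmHH, Matrix.of_apply,
      Matrix.cons_val', Matrix.cons_val, Matrix.cons_val_fin_one, Fin.isValue, Fin.zero_eta,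
      Fin.mk_one, Fin.reduceFinMk, Fin.reduceEq, reduceIte, Nat.cast_ofNat, Nat.reduceSub,
      pd_mul, pd_add, pd_sub, pd_neg, pd_pow, pd_div_const, pd_coord, pd_const] <;>
    ring

end
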